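/- Let n be a natural number, I : Set (Fin n), τ a permutation of Fin n, c a permutation of Fin n, and i : Fin n with i in the support of c. Let ν ∈ H(I) be a permutation that moreover fixes every element of the support of c. Then for every family 𝒢 : Set (Set (Fin n)), the number of σ ∈ H(I) with Equiv.Perm.cycleOf (σ⁻¹ * τ * σ) i = c and 𝒢[σ⁻¹ * τ * σ] = 𝒢 equals the number of σ ∈ H(I) with Equiv.Perm.cycleOf (σ⁻¹ * τ * σ) i = c and 𝒢[σ⁻¹ * τ * σ] = (fun B => ν '' B) '' 𝒢. (This is the security of the secure grouping protocol: conditioned on player i's cycle being c, the rest of the grouping is uniformly distributed up to relabelings fixing i's group, so player i learns nothing about the groups not containing i.) -/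

import Mathlib

/-!
Right multiplication `σ ↦ σ * ν⁻¹` is a bijection of `H(I)` onto itself that turns the
conjugate `σ⁻¹ * τ * σ` into its conjugate by `ν`. Conjugating by `ν` relabels the orbit
partition by `ν`, and it leaves the cycle through `i` unchanged, because `ν` fixes `i` and
commutes with `c` (their supports are disjoint).
-/

/-- The grouping (orbit partition) specified by a permutation. -/
def grouping {n : ℕ} (π : Equiv.Perm (Fin n)) : Set (Set (Fin n)) :=
  Set.range (fun i => {x | Equiv.Perm.SameCycle π i x})

/-- The set of permutations fixing every element of `I` pointwise. -/
def fixesSet {n : ℕ} (I : Set (Fin n)) : Set (Equiv.Perm (Fin n)) :=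
  {σ | ∀ a ∈ I, σ a = a}

namespace Equiv.Perm

variable {α : Type*}

theorem disjoint_of_forall_mem_support_apply_eq [DecidableEq α] [Fintype α] {g c : Perm α}
    (h : ∀ x ∈ c.support, g x = x) : Disjoint g c :=
  fun x => (em (x ∈ c.support)).imp (h x) notMem_support.mp

theorem image_setOf_sameCycle_conj (π g : Perm α) (x : α) :
    g '' {y | π.SameCycle x y} = {y | (g * π * g⁻¹).SameCycle (g x) y} := by
  ext y
  simp [sameCycle_conj, Equiv.image_eq_preimage_symm]

variable [DecidableEq α] [Fintype α]

theorem cycleOf_conj (π g : Perm α) (x : α) :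
    (g * π * g⁻¹).cycleOf x = g * π.cycleOf (g⁻¹ x) * g⁻¹ := by
  ext y
  simp only [cycleOf_apply, sameCycle_conj, mul_apply]
  split_ifs <;> simp

theorem cycleOf_conj_eq_iff {π g c : Perm α} {x : α} (hgx : g x = x) (hgc : Commute g c) :
    (g * π * g⁻¹).cycleOf x = c ↔ π.cycleOf x = c := by
  rw [cycleOf_conj, inv_eq_iff_eq.mpr hgx.symm]
  conv_lhs => rw [← hgc.mul_inv_cancel]
  rw [mul_left_inj, mul_right_inj]

end Equiv.Perm

open Equiv Perm

theorem grouping_conj {n : ℕ} (π g : Perm (Fin n)) :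
    grouping (g * π * g⁻¹) = (fun B => g '' B) '' grouping π := by
  rw [grouping, grouping, ← Set.range_comp, ← g.surjective.range_comp]
  simp only [Function.comp_def, image_setOf_sameCycle_conj]

theorem grouping_conj_eq_image_iff {n : ℕ} (π g : Perm (Fin n)) (𝒢 : Set (Set (Fin n))) :
    grouping (g * π * g⁻¹) = (fun B => g '' B) '' 𝒢 ↔ grouping π = 𝒢 := by
  rw [grouping_conj]
  exact (Set.image_injective.2 (Set.image_injective.2 g.injective)).eq_iff

theorem fixesSet_eq_fixingSubgroup {n : ℕ} (I : Set (Fin n)) :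
    fixesSet I = fixingSubgroup (Perm (Fin n)) I := by
  ext σ
  simp [fixesSet, mem_fixingSubgroup_iff, Perm.smul_def]

theorem secure_grouping_security {n : ℕ} (I : Set (Fin n)) (τ c : Equiv.Perm (Fin n))
    (i : Fin n) (hi : i ∈ c.support) (ν : Equiv.Perm (Fin n)) (hνI : ν ∈ fixesSet I)
    (hνc : ∀ x ∈ c.support, ν x = x) (𝒢 : Set (Set (Fin n))) :
    Nat.card {σ : Equiv.Perm (Fin n) // σ ∈ fixesSet I ∧
        Equiv.Perm.cycleOf (σ⁻¹ * τ * σ) i = c ∧ grouping (σ⁻¹ * τ * σ) = 𝒢} =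
      Nat.card {σ : Equiv.Perm (Fin n) // σ ∈ fixesSet I ∧
        Equiv.Perm.cycleOf (σ⁻¹ * τ * σ) i = c ∧
        grouping (σ⁻¹ * τ * σ) = (fun B => ⇑ν '' B) '' 𝒢} := by
  have hcomm : Commute ν c := (disjoint_of_forall_mem_support_apply_eq hνc).commute
  rw [fixesSet_eq_fixingSubgroup] at hνI ⊢
  refine Nat.card_congr (Equiv.subtypeEquiv (Equiv.mulRight ν⁻¹) fun σ => ?_)
  have hconj : (σ * ν⁻¹)⁻¹ * τ * (σ * ν⁻¹) = ν * (σ⁻¹ * τ * σ) * ν⁻¹ := by group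
  rw [Equiv.coe_mulRight, hconj, cycleOf_conj_eq_iff (hνc i hi) hcomm,
    grouping_conj_eq_image_iff, SetLike.mem_coe, SetLike.mem_coe,
    Subgroup.mul_mem_cancel_right _ (inv_mem hνI)]
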